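/- Constructability (synthetic clause): If Γ ⊢ e ⇒ τ, then there exists a list of actions ᾱ such that the iterated synthetic action judgement Γ ⊢ ▷⦇⦈◁ ⇒ ⦇⦈ --ᾱ--> ▷e◁ ⇒ τ holds, i.e. every H-expression that synthesizes a type can be constructed starting from the empty expression hole. -/
import Mathlib


/-! Hazelnut: H-types, H-expressions, bidirectional statics,
    Z-types, Z-expressions, and the bidirectional action semantics. -/

inductive HTyp : Type
  | num : HTyp
  | arr : HTyp → HTyp → HTyp
  | hole : HTyp
  deriving DecidableEq

inductive HExp : Type
  | var : String → HExp
  | lam : String → HExp → HExp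
  | ap : HExp → HExp → HExp
  | lit : Nat → HExp
  | plus : HExp → HExp → HExp
  | asc : HExp → HTyp → HExp
  | hole : HExp
  | nehole : HExp → HExp
  deriving DecidableEq

/-- Typing contexts map variables to hypothesized H-types. -/
def Ctx : Type := String → Option HTyp

/-- Context extension Γ, x : τ. -/
def Ctx.extend (Γ : Ctx) (x : String) (τ : HTyp) : Ctx :=
  fun y => if y = x then some τ else Γ y

/-- Type consistency τ ~ τ'. -/
inductive Consistent : HTyp → HTyp → Prop
  | holeR (τ : HTyp) : Consistent τ .hole
  | holeL (τ : HTyp) : Consistent .hole τ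
  | refl (τ : HTyp) : Consistent τ τ
  | arr {τ₁ τ₂ τ₁' τ₂' : HTyp} :
      Consistent τ₁ τ₁' → Consistent τ₂ τ₂' →
      Consistent (.arr τ₁ τ₂) (.arr τ₁' τ₂')

/-- Type inconsistency τ ≁ τ'. -/
inductive Inconsistent : HTyp → HTyp → Prop
  | numArr (τ₁ τ₂ : HTyp) : Inconsistent .num (.arr τ₁ τ₂)
  | arrNum (τ₁ τ₂ : HTyp) : Inconsistent (.arr τ₁ τ₂) .num
  | arr1 {τ₁ τ₂ τ₃ τ₄ : HTyp} :
      Inconsistent τ₁ τ₃ → Inconsistent (.arr τ₁ τ₂) (.arr τ₃ τ₄)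
  | arr2 {τ₁ τ₂ τ₃ τ₄ : HTyp} :
      Inconsistent τ₂ τ₄ → Inconsistent (.arr τ₁ τ₂) (.arr τ₃ τ₄)

/-- Matched arrow type: τ ▸ τ₁ → τ₂. -/
inductive MArr : HTyp → HTyp → HTyp → Prop
  | hole : MArr .hole .hole .hole
  | arr (τ₁ τ₂ : HTyp) : MArr (.arr τ₁ τ₂) τ₁ τ₂

mutual
  /-- Type synthesis: Γ ⊢ e ⇒ τ. -/
  inductive Syn : Ctx → HExp → HTyp → Prop
    | var {Γ : Ctx} {x : String} {τ : HTyp} :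
        Γ x = some τ → Syn Γ (.var x) τ
    | asc {Γ : Ctx} {e : HExp} {τ : HTyp} :
        Ana Γ e τ → Syn Γ (.asc e τ) τ
    | ap {Γ : Ctx} {e₁ e₂ : HExp} {τ₁ τ₂ τ : HTyp} :
        Syn Γ e₁ τ₁ → MArr τ₁ τ₂ τ → Ana Γ e₂ τ₂ → Syn Γ (.ap e₁ e₂) τ
    | lit {Γ : Ctx} (n : Nat) : Syn Γ (.lit n) .num
    | plus {Γ : Ctx} {e₁ e₂ : HExp} :
        Ana Γ e₁ .num → Ana Γ e₂ .num → Syn Γ (.plus e₁ e₂) .num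
    | hole {Γ : Ctx} : Syn Γ .hole .hole
    | nehole {Γ : Ctx} {e : HExp} {τ : HTyp} :
        Syn Γ e τ → Syn Γ (.nehole e) .hole

  /-- Type analysis: Γ ⊢ e ⇐ τ. -/
  inductive Ana : Ctx → HExp → HTyp → Prop
    | lam {Γ : Ctx} {x : String} {e : HExp} {τ τ₁ τ₂ : HTyp} :
        MArr τ τ₁ τ₂ → Ana (Γ.extend x τ₁) e τ₂ → Ana Γ (.lam x e) τ
    | subsume {Γ : Ctx} {e : HExp} {τ τ' : HTyp} :
        Syn Γ e τ' → Consistent τ τ' → Ana Γ e τ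
end

/-- Z-types: H-types with a cursor. -/
inductive ZTyp : Type
  | cursor : HTyp → ZTyp
  | arrL : ZTyp → HTyp → ZTyp
  | arrR : HTyp → ZTyp → ZTyp
  deriving DecidableEq

/-- Z-expressions: H-expressions with a cursor. -/
inductive ZExp : Type
  | cursor : HExp → ZExp
  | lam : String → ZExp → ZExp
  | apL : ZExp → HExp → ZExp
  | apR : HExp → ZExp → ZExp
  | plusL : ZExp → HExp → ZExp
  | plusR : HExp → ZExp → ZExp
  | ascL : ZExp → HTyp → ZExp
  | ascR : HExp → ZTyp → ZExp
  | nehole : ZExp → ZExp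
  deriving DecidableEq

/-- Cursor erasure for Z-types: τ̂◇. -/
def ZTyp.erase : ZTyp → HTyp
  | .cursor τ => τ
  | .arrL zt τ => .arr zt.erase τ
  | .arrR τ zt => .arr τ zt.erase

/-- Cursor erasure for Z-expressions: ê◇. -/
def ZExp.erase : ZExp → HExp
  | .cursor e => e
  | .lam x ze => .lam x ze.erase
  | .apL ze e => .ap ze.erase e
  | .apR e ze => .ap e ze.erase
  | .plusL ze e => .plus ze.erase e
  | .plusR e ze => .plus e ze.erase
  | .ascL ze τ => .asc ze.erase τ
  | .ascR e zt => .asc e zt.erase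
  | .nehole ze => .nehole ze.erase

inductive Dir : Type
  | child : Nat → Dir
  | parent : Dir
  deriving DecidableEq

inductive Shape : Type
  | arrow : Shape
  | num : Shape
  | asc : Shape
  | var : String → Shape
  | lam : String → Shape
  | ap : Shape
  | lit : Nat → Shape
  | plus : Shape
  | nehole : Shape
  deriving DecidableEq

inductive HAction : Type
  | move : Dir → HAction
  | construct : Shape → HAction
  | del : HAction
  | finish : HAction
  deriving DecidableEq

/-- Type actions: τ̂ --α--> τ̂'. -/
inductive TAct : ZTyp → HAction → ZTyp → Prop
  | arrChild1 {τ₁ τ₂ : HTyp} :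
      TAct (.cursor (.arr τ₁ τ₂)) (.move (.child 1)) (.arrL (.cursor τ₁) τ₂)
  | arrChild2 {τ₁ τ₂ : HTyp} :
      TAct (.cursor (.arr τ₁ τ₂)) (.move (.child 2)) (.arrR τ₁ (.cursor τ₂))
  | arrParent1 {τ₁ τ₂ : HTyp} :
      TAct (.arrL (.cursor τ₁) τ₂) (.move .parent) (.cursor (.arr τ₁ τ₂))
  | arrParent2 {τ₁ τ₂ : HTyp} :
      TAct (.arrR τ₁ (.cursor τ₂)) (.move .parent) (.cursor (.arr τ₁ τ₂))
  | del {τ : HTyp} : TAct (.cursor τ) .del (.cursor .hole)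
  | conArrow {τ : HTyp} :
      TAct (.cursor τ) (.construct .arrow) (.arrR τ (.cursor .hole))
  | conNum : TAct (.cursor .hole) (.construct .num) (.cursor .num)
  | zip1 {zt zt' : ZTyp} {α : HAction} {τ : HTyp} :
      TAct zt α zt' → TAct (.arrL zt τ) α (.arrL zt' τ)
  | zip2 {zt zt' : ZTyp} {α : HAction} {τ : HTyp} :
      TAct zt α zt' → TAct (.arrR τ zt) α (.arrR τ zt')

/-- Expression movement: ê --move δ--> ê'. -/
inductive EMove : ZExp → Dir → ZExp → Prop
  | ascChild1 {e : HExp} {τ : HTyp} :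
      EMove (.cursor (.asc e τ)) (.child 1) (.ascL (.cursor e) τ)
  | ascChild2 {e : HExp} {τ : HTyp} :
      EMove (.cursor (.asc e τ)) (.child 2) (.ascR e (.cursor τ))
  | ascParent1 {e : HExp} {τ : HTyp} :
      EMove (.ascL (.cursor e) τ) .parent (.cursor (.asc e τ))
  | ascParent2 {e : HExp} {τ : HTyp} :
      EMove (.ascR e (.cursor τ)) .parent (.cursor (.asc e τ))
  | lamChild1 {x : String} {e : HExp} :
      EMove (.cursor (.lam x e)) (.child 1) (.lam x (.cursor e))
  | lamParent {x : String} {e : HExp} :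
      EMove (.lam x (.cursor e)) .parent (.cursor (.lam x e))
  | plusChild1 {e₁ e₂ : HExp} :
      EMove (.cursor (.plus e₁ e₂)) (.child 1) (.plusL (.cursor e₁) e₂)
  | plusChild2 {e₁ e₂ : HExp} :
      EMove (.cursor (.plus e₁ e₂)) (.child 2) (.plusR e₁ (.cursor e₂))
  | plusParent1 {e₁ e₂ : HExp} :
      EMove (.plusL (.cursor e₁) e₂) .parent (.cursor (.plus e₁ e₂))
  | plusParent2 {e₁ e₂ : HExp} :
      EMove (.plusR e₁ (.cursor e₂)) .parent (.cursor (.plus e₁ e₂))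
  | apChild1 {e₁ e₂ : HExp} :
      EMove (.cursor (.ap e₁ e₂)) (.child 1) (.apL (.cursor e₁) e₂)
  | apChild2 {e₁ e₂ : HExp} :
      EMove (.cursor (.ap e₁ e₂)) (.child 2) (.apR e₁ (.cursor e₂))
  | apParent1 {e₁ e₂ : HExp} :
      EMove (.apL (.cursor e₁) e₂) .parent (.cursor (.ap e₁ e₂))
  | apParent2 {e₁ e₂ : HExp} :
      EMove (.apR e₁ (.cursor e₂)) .parent (.cursor (.ap e₁ e₂))
  | neholeChild1 {e : HExp} :
      EMove (.cursor (.nehole e)) (.child 1) (.nehole (.cursor e))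
  | neholeParent {e : HExp} :
      EMove (.nehole (.cursor e)) .parent (.cursor (.nehole e))
  | ascZip1 {ze ze' : ZExp} {δ : Dir} {τ : HTyp} :
      EMove ze δ ze' → EMove (.ascL ze τ) δ (.ascL ze' τ)
  | ascZip2 {zt zt' : ZTyp} {δ : Dir} {e : HExp} :
      TAct zt (.move δ) zt' → EMove (.ascR e zt) δ (.ascR e zt')
  | lamZip {x : String} {ze ze' : ZExp} {δ : Dir} :
      EMove ze δ ze' → EMove (.lam x ze) δ (.lam x ze')
  | apZip1 {ze ze' : ZExp} {δ : Dir} {e : HExp} :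
      EMove ze δ ze' → EMove (.apL ze e) δ (.apL ze' e)
  | apZip2 {ze ze' : ZExp} {δ : Dir} {e : HExp} :
      EMove ze δ ze' → EMove (.apR e ze) δ (.apR e ze')
  | plusZip1 {ze ze' : ZExp} {δ : Dir} {e : HExp} :
      EMove ze δ ze' → EMove (.plusL ze e) δ (.plusL ze' e)
  | plusZip2 {ze ze' : ZExp} {δ : Dir} {e : HExp} :
      EMove ze δ ze' → EMove (.plusR e ze) δ (.plusR e ze')
  | neholeZip {ze ze' : ZExp} {δ : Dir} :
      EMove ze δ ze' → EMove (.nehole ze) δ (.nehole ze')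

mutual
  /-- Synthetic action judgement: Γ ⊢ ê ⇒ τ --α--> ê' ⇒ τ'. -/
  inductive SynAct : Ctx → ZExp → HTyp → HAction → ZExp → HTyp → Prop
    | move {Γ : Ctx} {ze ze' : ZExp} {τ : HTyp} {δ : Dir} :
        EMove ze δ ze' → SynAct Γ ze τ (.move δ) ze' τ
    | del {Γ : Ctx} {e : HExp} {τ : HTyp} :
        SynAct Γ (.cursor e) τ .del (.cursor .hole) .hole
    | conAsc {Γ : Ctx} {e : HExp} {τ : HTyp} :
        SynAct Γ (.cursor e) τ (.construct .asc) (.ascR e (.cursor τ)) τ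
    | conVar {Γ : Ctx} {x : String} {τ : HTyp} :
        Γ x = some τ →
        SynAct Γ (.cursor .hole) .hole (.construct (.var x)) (.cursor (.var x)) τ
    | conLam {Γ : Ctx} {x : String} :
        SynAct Γ (.cursor .hole) .hole (.construct (.lam x))
          (.ascR (.lam x .hole) (.arrL (.cursor .hole) .hole)) (.arr .hole .hole)
    | conApArr {Γ : Ctx} {e : HExp} {τ τ₁ τ₂ : HTyp} :
        MArr τ τ₁ τ₂ →
        SynAct Γ (.cursor e) τ (.construct .ap) (.apR e (.cursor .hole)) τ₂
    | conApOtw {Γ : Ctx} {e : HExp} {τ : HTyp} :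
        Inconsistent τ (.arr .hole .hole) →
        SynAct Γ (.cursor e) τ (.construct .ap)
          (.apR (.nehole e) (.cursor .hole)) .hole
    | conLit {Γ : Ctx} {n : Nat} :
        SynAct Γ (.cursor .hole) .hole (.construct (.lit n)) (.cursor (.lit n)) .num
    | conPlus1 {Γ : Ctx} {e : HExp} {τ : HTyp} :
        Consistent τ .num →
        SynAct Γ (.cursor e) τ (.construct .plus) (.plusR e (.cursor .hole)) .num
    | conPlus2 {Γ : Ctx} {e : HExp} {τ : HTyp} :
        Inconsistent τ .num →
        SynAct Γ (.cursor e) τ (.construct .plus)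
          (.plusR (.nehole e) (.cursor .hole)) .num
    | conNEHole {Γ : Ctx} {e : HExp} {τ : HTyp} :
        SynAct Γ (.cursor e) τ (.construct .nehole) (.nehole (.cursor e)) .hole
    | finish {Γ : Ctx} {e : HExp} {τ' : HTyp} :
        Syn Γ e τ' →
        SynAct Γ (.cursor (.nehole e)) .hole .finish (.cursor e) τ'
    | zipAsc1 {Γ : Ctx} {ze ze' : ZExp} {τ : HTyp} {α : HAction} :
        AnaAct Γ ze τ α ze' →
        SynAct Γ (.ascL ze τ) τ α (.ascL ze' τ) τ
    | zipAsc2 {Γ : Ctx} {e : HExp} {zt zt' : ZTyp} {α : HAction} :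
        TAct zt α zt' → Ana Γ e zt'.erase →
        SynAct Γ (.ascR e zt) zt.erase α (.ascR e zt') zt'.erase
    | zipApArr {Γ : Ctx} {ze ze' : ZExp} {e : HExp} {τ₁ τ₂ τ₃ τ₄ τ₅ : HTyp} {α : HAction} :
        Syn Γ ze.erase τ₂ → SynAct Γ ze τ₂ α ze' τ₃ →
        MArr τ₃ τ₄ τ₅ → Ana Γ e τ₄ →
        SynAct Γ (.apL ze e) τ₁ α (.apL ze' e) τ₅
    | zipApAna {Γ : Ctx} {ze ze' : ZExp} {e : HExp} {τ₁ τ₂ τ₃ τ₄ : HTyp} {α : HAction} :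
        Syn Γ e τ₂ → MArr τ₂ τ₃ τ₄ → AnaAct Γ ze τ₃ α ze' →
        SynAct Γ (.apR e ze) τ₁ α (.apR e ze') τ₄
    | zipPlus1 {Γ : Ctx} {ze ze' : ZExp} {e : HExp} {α : HAction} :
        AnaAct Γ ze .num α ze' →
        SynAct Γ (.plusL ze e) .num α (.plusL ze' e) .num
    | zipPlus2 {Γ : Ctx} {ze ze' : ZExp} {e : HExp} {α : HAction} :
        AnaAct Γ ze .num α ze' →
        SynAct Γ (.plusR e ze) .num α (.plusR e ze') .num
    | zipHole {Γ : Ctx} {ze ze' : ZExp} {τ τ' : HTyp} {α : HAction} :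
        Syn Γ ze.erase τ → SynAct Γ ze τ α ze' τ' →
        SynAct Γ (.nehole ze) .hole α (.nehole ze') .hole

  /-- Analytic action judgement: Γ ⊢ ê --α--> ê' ⇐ τ. -/
  inductive AnaAct : Ctx → ZExp → HTyp → HAction → ZExp → Prop
    | subsume {Γ : Ctx} {ze ze' : ZExp} {τ τ' τ'' : HTyp} {α : HAction} :
        Syn Γ ze.erase τ' → SynAct Γ ze τ' α ze' τ'' → Consistent τ τ'' →
        AnaAct Γ ze τ α ze'
    | move {Γ : Ctx} {ze ze' : ZExp} {τ : HTyp} {δ : Dir} :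
        EMove ze δ ze' → AnaAct Γ ze τ (.move δ) ze'
    | del {Γ : Ctx} {e : HExp} {τ : HTyp} :
        AnaAct Γ (.cursor e) τ .del (.cursor .hole)
    | conAsc {Γ : Ctx} {e : HExp} {τ : HTyp} :
        AnaAct Γ (.cursor e) τ (.construct .asc) (.ascR e (.cursor τ))
    | conVar {Γ : Ctx} {x : String} {τ τ' : HTyp} :
        Γ x = some τ' → Inconsistent τ τ' →
        AnaAct Γ (.cursor .hole) τ (.construct (.var x)) (.nehole (.cursor (.var x)))
    | conLam1 {Γ : Ctx} {x : String} {τ τ₁ τ₂ : HTyp} :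
        MArr τ τ₁ τ₂ →
        AnaAct Γ (.cursor .hole) τ (.construct (.lam x)) (.lam x (.cursor .hole))
    | conLam2 {Γ : Ctx} {x : String} {τ : HTyp} :
        Inconsistent τ (.arr .hole .hole) →
        AnaAct Γ (.cursor .hole) τ (.construct (.lam x))
          (.nehole (.ascR (.lam x .hole) (.arrL (.cursor .hole) .hole)))
    | conLit {Γ : Ctx} {n : Nat} {τ : HTyp} :
        Inconsistent τ .num →
        AnaAct Γ (.cursor .hole) τ (.construct (.lit n)) (.nehole (.cursor (.lit n)))
    | finish {Γ : Ctx} {e : HExp} {τ : HTyp} :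
        Ana Γ e τ →
        AnaAct Γ (.cursor (.nehole e)) τ .finish (.cursor e)
    | zipLam {Γ : Ctx} {x : String} {ze ze' : ZExp} {τ τ₁ τ₂ : HTyp} {α : HAction} :
        MArr τ τ₁ τ₂ → AnaAct (Γ.extend x τ₁) ze τ₂ α ze' →
        AnaAct Γ (.lam x ze) τ α (.lam x ze')
end

/-- Iterated type action judgement. -/
inductive TActI : ZTyp → List HAction → ZTyp → Prop
  | refl {zt : ZTyp} : TActI zt [] zt
  | cons {zt zt' zt'' : ZTyp} {α : HAction} {αs : List HAction} :
      TAct zt α zt' → TActI zt' αs zt'' → TActI zt (α :: αs) zt''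

/-- Iterated synthetic action judgement. -/
inductive SynActI : Ctx → ZExp → HTyp → List HAction → ZExp → HTyp → Prop
  | refl {Γ : Ctx} {ze : ZExp} {τ : HTyp} : SynActI Γ ze τ [] ze τ
  | cons {Γ : Ctx} {ze ze' ze'' : ZExp} {τ τ' τ'' : HTyp} {α : HAction} {αs : List HAction} :
      SynAct Γ ze τ α ze' τ' → SynActI Γ ze' τ' αs ze'' τ'' →
      SynActI Γ ze τ (α :: αs) ze'' τ''

/-- Iterated analytic action judgement. -/
inductive AnaActI : Ctx → ZExp → HTyp → List HAction → ZExp → Prop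
  | refl {Γ : Ctx} {ze : ZExp} {τ : HTyp} : AnaActI Γ ze τ [] ze
  | cons {Γ : Ctx} {ze ze' ze'' : ZExp} {τ : HTyp} {α : HAction} {αs : List HAction} :
      AnaAct Γ ze τ α ze' → AnaActI Γ ze' τ αs ze'' →
      AnaActI Γ ze τ (α :: αs) ze''

/-- Every action in the list is a movement action. -/
inductive Movements : List HAction → Prop
  | nil : Movements []
  | cons {δ : Dir} {αs : List HAction} :
      Movements αs → Movements (.move δ :: αs)

/-! Auxiliary development for constructability. -/

/-- Any hole analyzes against any type. -/
lemma anaHole (Γ : Ctx) (τ : HTyp) : Ana Γ .hole τ :=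
  Ana.subsume Syn.hole (Consistent.holeR τ)

/-- "Good" synthetic sequences: iterated synthetic actions where every
    intermediate (post-step) state is sensible. -/
inductive SG (Γ : Ctx) : ZExp → HTyp → List HAction → ZExp → HTyp → Prop
  | refl {ze τ} : SG Γ ze τ [] ze τ
  | cons {ze τ α ze' τ' αs ze'' τ''} :
      SynAct Γ ze τ α ze' τ' → Syn Γ ze'.erase τ' →
      SG Γ ze' τ' αs ze'' τ'' → SG Γ ze τ (α :: αs) ze'' τ''

/-- "Good" analytic sequences. -/
inductive AG (Γ : Ctx) (τ : HTyp) : ZExp → List HAction → ZExp → Prop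
  | refl {ze} : AG Γ τ ze [] ze
  | cons {ze α ze' αs ze''} :
      AnaAct Γ ze τ α ze' → Ana Γ ze'.erase τ →
      AG Γ τ ze' αs ze'' → AG Γ τ ze (α :: αs) ze''

lemma SG.toI {Γ ze τ αs ze' τ'} (h : SG Γ ze τ αs ze' τ') :
    SynActI Γ ze τ αs ze' τ' := by
  induction h with
  | refl => exact .refl
  | cons s _ _ ih => exact .cons s ih

lemma SG.append {Γ ze τ αs ze' τ' βs ze'' τ''}
    (h : SG Γ ze τ αs ze' τ') (h' : SG Γ ze' τ' βs ze'' τ'') :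
    SG Γ ze τ (αs ++ βs) ze'' τ'' := by
  induction h with
  | refl => exact h'
  | cons s hs _ ih => exact .cons s hs (ih h')

lemma SG.single {Γ ze τ α ze' τ'} (s : SynAct Γ ze τ α ze' τ')
    (hs : Syn Γ ze'.erase τ') : SG Γ ze τ [α] ze' τ' :=
  .cons s hs .refl

lemma AG.append {Γ τ ze αs ze' βs ze''}
    (h : AG Γ τ ze αs ze') (h' : AG Γ τ ze' βs ze'') :
    AG Γ τ ze (αs ++ βs) ze'' := by
  induction h with
  | refl => exact h'
  | cons s hs _ ih => exact .cons s hs (ih h')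

lemma AG.single {Γ τ ze α ze'} (s : AnaAct Γ ze τ α ze')
    (hs : Ana Γ ze'.erase τ) : AG Γ τ ze [α] ze' :=
  .cons s hs .refl

/-! Iterated type actions. -/

lemma TActI.append {zt αs zt' βs zt''}
    (h : TActI zt αs zt') (h' : TActI zt' βs zt'') :
    TActI zt (αs ++ βs) zt'' := by
  induction h with
  | refl => exact h'
  | cons s _ ih => exact .cons s (ih h')

lemma TActI.zip2 {zt αs zt'} (τ : HTyp) (h : TActI zt αs zt') :
    TActI (.arrR τ zt) αs (.arrR τ zt') := by
  induction h with
  | refl => exact .refl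
  | cons s _ ih => exact .cons (.zip2 s) ih

/-- Type constructability. -/
lemma type_constructable (τ : HTyp) :
    ∃ αs, TActI (.cursor .hole) αs (.cursor τ) := by
  induction τ with
  | num => exact ⟨[.construct .num], .cons .conNum .refl⟩
  | hole => exact ⟨[], .refl⟩
  | arr τ₁ τ₂ ih₁ ih₂ =>
    obtain ⟨αs₁, h₁⟩ := ih₁
    obtain ⟨αs₂, h₂⟩ := ih₂
    refine ⟨αs₁ ++ ([.construct .arrow] ++ (αs₂ ++ [.move .parent])), h₁.append ?_⟩
    exact .cons .conArrow ((TActI.zip2 τ₁ h₂).append (.cons .arrParent2 .refl))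

/-! Zipper lifting lemmas for good sequences. -/

lemma SG.liftAscR {Γ zt αs zt'} (h : TActI zt αs zt') :
    SG Γ (.ascR .hole zt) zt.erase αs (.ascR .hole zt') zt'.erase := by
  induction h with
  | refl => exact .refl
  | @cons zt zta zt' α αs s _ ih =>
    exact .cons (.zipAsc2 s (anaHole Γ _)) (Syn.asc (anaHole Γ _)) ih

lemma AG.liftAscL {Γ τ ze αs ze'} (h : AG Γ τ ze αs ze') :
    SG Γ (.ascL ze τ) τ αs (.ascL ze' τ) τ := by
  induction h with
  | refl => exact .refl
  | cons s hs _ ih => exact .cons (.zipAsc1 s) (Syn.asc hs) ih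

lemma AG.liftApR {Γ e₁ τ₁ τ₂ τ ze αs ze'} (hs₁ : Syn Γ e₁ τ₁) (hm : MArr τ₁ τ₂ τ)
    (h : AG Γ τ₂ ze αs ze') :
    SG Γ (.apR e₁ ze) τ αs (.apR e₁ ze') τ := by
  induction h with
  | refl => exact .refl
  | cons s ha _ ih => exact .cons (.zipApAna hs₁ hm s) (Syn.ap hs₁ hm ha) ih

lemma AG.liftPlusR {Γ e₁ ze αs ze'} (ha₁ : Ana Γ e₁ .num)
    (h : AG Γ .num ze αs ze') :
    SG Γ (.plusR e₁ ze) .num αs (.plusR e₁ ze') .num := by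
  induction h with
  | refl => exact .refl
  | cons s ha _ ih => exact .cons (.zipPlus2 s) (Syn.plus ha₁ ha) ih

lemma AG.liftPlusL {Γ e₂ ze αs ze'} (ha₂ : Ana Γ e₂ .num)
    (h : AG Γ .num ze αs ze') :
    SG Γ (.plusL ze e₂) .num αs (.plusL ze' e₂) .num := by
  induction h with
  | refl => exact .refl
  | cons s ha _ ih => exact .cons (.zipPlus1 s) (Syn.plus ha ha₂) ih

lemma AG.liftLam {Γ x τ τ₁ τ₂ ze αs ze'} (hm : MArr τ τ₁ τ₂)
    (h : AG (Γ.extend x τ₁) τ₂ ze αs ze') :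
    AG Γ τ (.lam x ze) αs (.lam x ze') := by
  induction h with
  | refl => exact .refl
  | cons s ha _ ih => exact .cons (.zipLam hm s) (Ana.lam hm ha) ih

/-- Lift a good synthetic sequence through a non-empty hole, analytically
    against an arbitrary type. -/
lemma SG.liftNEHole {Γ ze τ₀ αs ze' τ'} (h : SG Γ ze τ₀ αs ze' τ')
    (hpre : Syn Γ ze.erase τ₀) (τ : HTyp) :
    AG Γ τ (.nehole ze) αs (.nehole ze') := by
  induction h with
  | refl => exact .refl
  | cons s hs _ ih =>
    exact .cons (AnaAct.subsume (Syn.nehole hpre) (SynAct.zipHole hpre s)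
        (Consistent.holeR τ))
      (Ana.subsume (Syn.nehole hs) (Consistent.holeR τ)) (ih hs)

/-- From a good synthetic construction of `e`, get an analytic construction
    against any consistent type, via nehole + finish. -/
lemma syn_to_ana {Γ e τ'' αs} (h : SG Γ (.cursor .hole) .hole αs (.cursor e) τ'')
    (he : Syn Γ e τ'') {τ : HTyp} (hc : Consistent τ τ'') :
    ∃ βs, AG Γ τ (.cursor .hole) βs (.cursor e) := by
  refine ⟨.construct .nehole :: (αs ++ [.move .parent, .finish]), ?_⟩
  refine AG.cons (AnaAct.subsume Syn.hole SynAct.conNEHole (Consistent.holeR τ))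
    (Ana.subsume (Syn.nehole Syn.hole) (Consistent.holeR τ)) ?_
  refine (h.liftNEHole Syn.hole τ).append ?_
  refine AG.cons (AnaAct.move EMove.neholeParent)
    (Ana.subsume (Syn.nehole he) (Consistent.holeR τ)) ?_
  exact AG.single (AnaAct.finish (Ana.subsume he hc)) (Ana.subsume he hc)

/-- Main constructability lemma, good-sequence version, by mutual induction. -/
lemma constructability_good {Γ e τ} (hsyn : Syn Γ e τ) :
    ∃ αs, SG Γ (.cursor .hole) .hole αs (.cursor e) τ := by
  induction hsyn using Syn.rec
    (motive_2 := fun Γ e τ _ => ∃ αs, AG Γ τ (.cursor .hole) αs (.cursor e)) with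
  | var h => exact ⟨_, SG.single (.conVar h) (Syn.var h)⟩
  | @asc Γ e τ ha ih =>
    obtain ⟨βs, hβ⟩ := type_constructable τ
    obtain ⟨αs, hα⟩ := ih
    refine ⟨.construct .asc ::
      (βs ++ ([.move .parent, .move (.child 1)] ++ (αs ++ [.move .parent]))), ?_⟩
    refine SG.cons SynAct.conAsc (Syn.asc (anaHole Γ _)) ?_
    refine (SG.liftAscR hβ).append ?_
    refine SG.cons (.move .ascParent2) (Syn.asc (anaHole Γ τ)) ?_
    refine SG.cons (.move .ascChild1) (Syn.asc (anaHole Γ τ)) ?_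
    exact (hα.liftAscL).append
      (SG.single (.move .ascParent1) (Syn.asc ha))
  | @ap Γ e₁ e₂ τ₁ τ₂ τ hs₁ hm ha₂ ih₁ ih₂ =>
    obtain ⟨αs₁, h₁⟩ := ih₁
    obtain ⟨αs₂, h₂⟩ := ih₂
    refine ⟨αs₁ ++ (.construct .ap :: (αs₂ ++ [.move .parent])), h₁.append ?_⟩
    refine SG.cons (.conApArr hm) (Syn.ap hs₁ hm (anaHole Γ τ₂)) ?_
    exact (h₂.liftApR hs₁ hm).append
      (SG.single (.move .apParent2) (Syn.ap hs₁ hm ha₂))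
  | lit n => exact ⟨_, SG.single .conLit (Syn.lit n)⟩
  | @plus Γ e₁ e₂ ha₁ ha₂ ih₁ ih₂ =>
    obtain ⟨αs₁, h₁⟩ := ih₁
    obtain ⟨αs₂, h₂⟩ := ih₂
    refine ⟨.construct .plus ::
      (αs₂ ++ ([.move .parent, .move (.child 1)] ++ (αs₁ ++ [.move .parent]))), ?_⟩
    refine SG.cons (.conPlus1 (Consistent.holeL .num))
      (Syn.plus (anaHole Γ .num) (anaHole Γ .num)) ?_
    refine (h₂.liftPlusR (anaHole Γ .num)).append ?_
    refine SG.cons (.move .plusParent2) (Syn.plus (anaHole Γ .num) ha₂) ?_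
    refine SG.cons (.move .plusChild1) (Syn.plus (anaHole Γ .num) ha₂) ?_
    exact (h₁.liftPlusL ha₂).append
      (SG.single (.move .plusParent1) (Syn.plus ha₁ ha₂))
  | hole => exact ⟨[], .refl⟩
  | @nehole Γ e τ hs ih =>
    obtain ⟨αs, h⟩ := ih
    refine ⟨αs ++ [.construct .nehole, .move .parent], h.append ?_⟩
    exact SG.cons .conNEHole (Syn.nehole hs)
      (SG.single (.move .neholeParent) (Syn.nehole hs))
  | @lam Γ x e τ τ₁ τ₂ hm ha ih =>
    obtain ⟨αs, h⟩ := ih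
    refine ⟨.construct (.lam x) :: (αs ++ [.move .parent]), ?_⟩
    refine AG.cons (.conLam1 hm) (Ana.lam hm (anaHole _ τ₂)) ?_
    exact (h.liftLam hm).append
      (AG.single (.move .lamParent) (Ana.lam hm ha))
  | @subsume Γ e τ τ' hs hc ih =>
    obtain ⟨αs, h⟩ := ih
    exact syn_to_ana h hs hc

/-- Constructability (synthetic clause). -/
theorem constructability_syn {Γ : Ctx} {e : HExp} {τ : HTyp}
    (hsyn : Syn Γ e τ) :
    ∃ αs : List HAction, SynActI Γ (.cursor .hole) .hole αs (.cursor e) τ := by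
  obtain ⟨αs, h⟩ := constructability_good hsyn
  exact ⟨αs, h.toI⟩
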